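/- Fix an integer n ≥ 1. Let ψ be the C-algebra homomorphism from the polynomial ring C[t, X_1, …, X_{n+3}] onto the quotient ring C[t, X_1, X_2, X_3]/(X_1 X_2 − t(X_1 + X_2)) that fixes t, X_1, X_2, sends X_3 to (the class of) X_3, and sends X_{k+3} to (the class of) t^k X_3 for k = 1, …, n. Then the kernel of ψ is exactly the ideal generated by the 2×2 minors of the 2×(n+2) matrix whose columns are (1, t), (X_1 + X_2, X_1 X_2), and (X_{k+2}, X_{k+3}) for k = 1, …, n. -/

import Mathlib

/-!
The substitution `σ` behind `ψ`, sending `X_{k+3} ↦ t^k X_3`, has the inclusion of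
`C[t, X_1, X_2, X_3]` as a section, so the kernel of `σ` is generated by the differences
`X_i - σ(X_i)`, and the kernel of `ψ` only adds the relation `X_1 X_2 - t(X_1 + X_2)`. That
relation is the minor of the first two columns, and `X_{k+3} - t^k X_3` telescopes into the
minors `X_{i+1} - t X_i` of the first column against the later ones. Conversely every minor lies
in the kernel because `ψ` maps the second row to `t` times the first.
-/

open MvPolynomial

/-- The hypersurface ring `C[t, X_1, X_2, X_3]/(X_1 X_2 − t(X_1 + X_2))`, with
variables `t, X_1, X_2, X_3` indexed as `X 0, X 1, X 2, X 3`. -/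
noncomputable abbrev chartRing0 : Type :=
  MvPolynomial (Fin 4) ℂ ⧸
    Ideal.span {(X 1 * X 2 - X 0 * (X 1 + X 2) : MvPolynomial (Fin 4) ℂ)}

/-- The map `C[t, X_1, …, X_{n+3}] → C[t,X_1,X_2,X_3]/(X_1X_2 − t(X_1+X_2))`
fixing `t, X_1, X_2`, sending `X_3 ↦ X_3` and `X_{k+3} ↦ t^k X_3` for `k = 1, …, n`.
The source variables are indexed by `Fin (n+4)` with `t = X 0` and `X_j = X j`. -/
noncomputable def chartHom0 (n : ℕ) :
    MvPolynomial (Fin (n + 4)) ℂ →ₐ[ℂ] chartRing0 :=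
  aeval fun i : Fin (n + 4) =>
    if h : (i : ℕ) ≤ 3 then Ideal.Quotient.mk _ (X ⟨(i : ℕ), by omega⟩)
    else Ideal.Quotient.mk _ (X 0 ^ ((i : ℕ) - 3) * X 3)

/-- First row `(1, X_1 + X_2, X_3, X_4, …, X_{n+2})` of the matrix. -/
noncomputable def cha0Row1 (n : ℕ) : Fin (n + 2) → MvPolynomial (Fin (n + 4)) ℂ := fun k =>
  if (k : ℕ) = 0 then 1
  else if (k : ℕ) = 1 then X 1 + X 2
  else X ⟨(k : ℕ) + 1, by omega⟩

/-- Second row `(t, X_1 X_2, X_4, X_5, …, X_{n+3})` of the matrix. -/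
noncomputable def chz0Row2 (n : ℕ) : Fin (n + 2) → MvPolynomial (Fin (n + 4)) ℂ := fun k =>
  if (k : ℕ) = 0 then X 0
  else if (k : ℕ) = 1 then X 1 * X 2
  else X ⟨(k : ℕ) + 2, by omega⟩

namespace MvPolynomial

variable {R : Type*} [CommRing R] {ι κ : Type*} {σ : ι → MvPolynomial κ R} {j : κ → ι}

theorem aeval_rename_of_comp_eq_X (hσ : ∀ k, σ (j k) = X k) (p : MvPolynomial κ R) :
    aeval σ (rename j p) = p := by
  rw [aeval_rename, show σ ∘ j = X from _root_.funext hσ, aeval_X_left_apply]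

theorem aeval_surjective_of_comp_eq_X (hσ : ∀ k, σ (j k) = X k) :
    Function.Surjective (aeval (R := R) σ) :=
  fun p => ⟨rename j p, aeval_rename_of_comp_eq_X hσ p⟩

theorem ker_aeval_of_comp_eq_X (hσ : ∀ k, σ (j k) = X k) :
    RingHom.ker (aeval (R := R) σ) = Ideal.span (Set.range fun i => X i - rename j (σ i)) := by
  set I := Ideal.span (Set.range fun i => X i - rename j (σ i))
  apply le_antisymm
  · have hq : Ideal.Quotient.mkₐ R I =
        (Ideal.Quotient.mkₐ R I).comp ((rename j).comp (aeval σ)) := by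
      refine algHom_ext fun i => ?_
      simp only [AlgHom.comp_apply, aeval_X, Ideal.Quotient.mkₐ_eq_mk, Ideal.Quotient.eq]
      exact Ideal.subset_span ⟨i, rfl⟩
    intro p hp
    rw [← Ideal.Quotient.eq_zero_iff_mem, ← Ideal.Quotient.mkₐ_eq_mk R, hq,
      AlgHom.comp_apply, AlgHom.comp_apply, RingHom.mem_ker.mp hp, map_zero, map_zero]
  · rw [Ideal.span_le]
    rintro _ ⟨i, rfl⟩
    rw [SetLike.mem_coe, RingHom.mem_ker, map_sub, aeval_X, aeval_rename_of_comp_eq_X hσ,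
      sub_self]

end MvPolynomial

section Chart

variable (n : ℕ)

noncomputable abbrev chartRel : MvPolynomial (Fin 4) ℂ := X 1 * X 2 - X 0 * (X 1 + X 2)

noncomputable def chartSubst : Fin (n + 4) → MvPolynomial (Fin 4) ℂ := fun i =>
  if h : (i : ℕ) ≤ 3 then X ⟨(i : ℕ), by omega⟩ else X 0 ^ ((i : ℕ) - 3) * X 3

abbrev chartIncl : Fin 4 → Fin (n + 4) := Fin.castLE (by omega)

noncomputable def chartMinorIdeal : Ideal (MvPolynomial (Fin (n + 4)) ℂ) :=
  Ideal.span {m | ∃ i j : Fin (n + 2),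
    m = cha0Row1 n i * chz0Row2 n j - cha0Row1 n j * chz0Row2 n i}

theorem chartSubst_chartIncl (i : Fin 4) : chartSubst n (chartIncl n i) = X i := by
  rw [chartSubst, dif_pos (by simp; omega)]
  rfl

theorem chartSubst_succ (i : ℕ) (h3 : 3 ≤ i) (hi : i + 1 < n + 4) :
    chartSubst n ⟨i + 1, hi⟩ = X 0 * chartSubst n ⟨i, by omega⟩ := by
  simp only [chartSubst, dif_neg (by omega : ¬ i + 1 ≤ 3)]
  split_ifs with h
  · obtain rfl : i = 3 := by omega
    rw [pow_one]
    rfl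
  · rw [show i + 1 - 3 = i - 3 + 1 by omega, pow_succ]
    ring

theorem chartHom0_X (i : Fin (n + 4)) :
    chartHom0 n (X i) = Ideal.Quotient.mk _ (chartSubst n i) := by
  rw [chartHom0, aeval_X, chartSubst]
  split <;> rfl

theorem chartHom0_eq_comp :
    chartHom0 n = (Ideal.Quotient.mkₐ ℂ (Ideal.span {chartRel})).comp (aeval (chartSubst n)) :=
  algHom_ext fun i => by rw [chartHom0_X, AlgHom.comp_apply, aeval_X]; rfl

theorem chartHom0_surjective : Function.Surjective (chartHom0 n) := by
  rw [chartHom0_eq_comp]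
  exact Ideal.Quotient.mk_surjective.comp
    (aeval_surjective_of_comp_eq_X (chartSubst_chartIncl n))

theorem ker_chartHom0 :
    RingHom.ker (chartHom0 n) = Ideal.span {rename (chartIncl n) chartRel} ⊔
      Ideal.span (Set.range fun i => X i - rename (chartIncl n) (chartSubst n i)) := by
  have hσ := chartSubst_chartIncl n
  have hrel : Ideal.span {chartRel} =
      (Ideal.span {rename (chartIncl n) chartRel}).map (aeval (chartSubst n)) := by
    rw [Ideal.map_span, Set.image_singleton, aeval_rename_of_comp_eq_X hσ]
  have hker :
      RingHom.ker (chartHom0 n) = (Ideal.span {chartRel}).comap (aeval (chartSubst n)) := by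
    ext p
    rw [RingHom.mem_ker, Ideal.mem_comap, chartHom0_eq_comp, AlgHom.comp_apply,
      Ideal.Quotient.mkₐ_eq_mk, Ideal.Quotient.eq_zero_iff_mem]
  rw [hker, hrel, Ideal.comap_map_of_surjective _ (aeval_surjective_of_comp_eq_X hσ),
    ← RingHom.ker_eq_comap_bot, ker_aeval_of_comp_eq_X hσ]

@[simp] theorem cha0Row1_zero : cha0Row1 n 0 = 1 := by simp [cha0Row1]

@[simp] theorem chz0Row2_zero : chz0Row2 n 0 = X 0 := by simp [chz0Row2]

@[simp] theorem cha0Row1_one : cha0Row1 n 1 = X 1 + X 2 := by simp [cha0Row1]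

@[simp] theorem chz0Row2_one : chz0Row2 n 1 = X 1 * X 2 := by simp [chz0Row2]

theorem rename_chartRel :
    rename (chartIncl n) chartRel = X 1 * X 2 - X 0 * (X 1 + X 2) := by
  simp only [chartRel, map_sub, map_mul, map_add, rename_X]
  rfl

theorem cha0Row1_of_two_le (k : Fin (n + 2)) (hk : 2 ≤ (k : ℕ)) :
    cha0Row1 n k = X ⟨k + 1, by omega⟩ := by
  rw [cha0Row1, if_neg (by omega), if_neg (by omega)]

theorem chz0Row2_of_two_le (k : Fin (n + 2)) (hk : 2 ≤ (k : ℕ)) :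
    chz0Row2 n k = X ⟨k + 2, by omega⟩ := by
  rw [chz0Row2, if_neg (by omega), if_neg (by omega)]

theorem minor_mem_chartMinorIdeal (i j : Fin (n + 2)) :
    cha0Row1 n i * chz0Row2 n j - cha0Row1 n j * chz0Row2 n i ∈ chartMinorIdeal n :=
  Ideal.subset_span ⟨i, j, rfl⟩

theorem rename_chartRel_mem : rename (chartIncl n) chartRel ∈ chartMinorIdeal n := by
  convert minor_mem_chartMinorIdeal n 0 1 using 1
  rw [rename_chartRel, cha0Row1_zero, chz0Row2_zero, cha0Row1_one, chz0Row2_one]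
  ring

theorem X_succ_sub_mem (i : ℕ) (h3 : 3 ≤ i) (hi : i + 1 < n + 4) :
    X ⟨i + 1, hi⟩ - X 0 * X ⟨i, by omega⟩ ∈ chartMinorIdeal n := by
  have hk : 2 ≤ ((⟨i - 1, by omega⟩ : Fin (n + 2)) : ℕ) := by simp only; omega
  convert minor_mem_chartMinorIdeal n 0 ⟨i - 1, by omega⟩ using 1
  rw [chz0Row2_of_two_le n _ hk, cha0Row1_of_two_le n _ hk]
  simp only [cha0Row1_zero, chz0Row2_zero, show i - 1 + 2 = i + 1 by omega,
    show i - 1 + 1 = i by omega]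
  ring

theorem X_sub_rename_chartSubst_of_le_three (i : Fin (n + 4)) (hi : (i : ℕ) ≤ 3) :
    X i - rename (chartIncl n) (chartSubst n i) = 0 := by
  rw [show i = chartIncl n ⟨i, by omega⟩ from rfl, chartSubst_chartIncl, rename_X, sub_self]

theorem X_sub_rename_chartSubst_mem (i : Fin (n + 4)) :
    X i - rename (chartIncl n) (chartSubst n i) ∈ chartMinorIdeal n := by
  obtain ⟨i, hi⟩ := i
  induction i with
  | zero =>
    rw [X_sub_rename_chartSubst_of_le_three n ⟨0, hi⟩ (Nat.zero_le 3)]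
    exact zero_mem _
  | succ i ih =>
    rcases Nat.lt_or_ge i 3 with h | h
    · rw [X_sub_rename_chartSubst_of_le_three n ⟨i + 1, hi⟩ h]
      exact zero_mem _
    have hsplit : X ⟨i + 1, hi⟩ - rename (chartIncl n) (chartSubst n ⟨i + 1, hi⟩) =
        (X ⟨i + 1, hi⟩ - X 0 * X ⟨i, by omega⟩) +
          X 0 * (X ⟨i, by omega⟩ - rename (chartIncl n) (chartSubst n ⟨i, by omega⟩)) := by
      rw [chartSubst_succ n i h hi, map_mul, rename_X, show chartIncl n 0 = 0 from rfl]
      ring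
    rw [hsplit]
    exact add_mem (X_succ_sub_mem n i h hi) (Ideal.mul_mem_left _ _ (ih _))

theorem chartHom0_row2 (k : Fin (n + 2)) :
    chartHom0 n (chz0Row2 n k) = chartHom0 n (X 0) * chartHom0 n (cha0Row1 n k) := by
  obtain ⟨k, hk⟩ := k
  rcases k with _ | _ | k
  · simp [chz0Row2, cha0Row1]
  · simp only [chz0Row2, cha0Row1, zero_add, if_neg one_ne_zero, if_true]
    rw [← map_mul, chartHom0_eq_comp, AlgHom.comp_apply, AlgHom.comp_apply,
      Ideal.Quotient.mkₐ_eq_mk, Ideal.Quotient.eq, ← map_sub, ← rename_chartRel,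
      aeval_rename_of_comp_eq_X (chartSubst_chartIncl n)]
    exact Ideal.mem_span_singleton_self _
  · rw [chz0Row2_of_two_le n _ (by simp), cha0Row1_of_two_le n _ (by simp)]
    simp only [chartHom0_X, chartSubst_succ n (k + 3) (by omega) (by omega),
      show chartSubst n 0 = X 0 from chartSubst_chartIncl n 0, map_mul]

end Chart

theorem stmt11_general (n : ℕ) :
    Function.Surjective (chartHom0 n) ∧
    RingHom.ker (chartHom0 n) =
      Ideal.span {m | ∃ i j : Fin (n + 2),
        m = cha0Row1 n i * chz0Row2 n j - cha0Row1 n j * chz0Row2 n i} := by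
  refine ⟨chartHom0_surjective n, le_antisymm ?_ ?_⟩
  · rw [ker_chartHom0, sup_le_iff, Ideal.span_le, Ideal.span_le, Set.singleton_subset_iff,
      Set.range_subset_iff]
    exact ⟨rename_chartRel_mem n, X_sub_rename_chartSubst_mem n⟩
  · rw [Ideal.span_le]
    rintro _ ⟨i, j, rfl⟩
    rw [SetLike.mem_coe, RingHom.mem_ker, map_sub, map_mul, map_mul, chartHom0_row2,
      chartHom0_row2]
    ring

theorem stmt11 (n : ℕ) (hn : 1 ≤ n) :
    Function.Surjective (chartHom0 n) ∧
    RingHom.ker (chartHom0 n) =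
      Ideal.span {m | ∃ i j : Fin (n + 2),
        m = cha0Row1 n i * chz0Row2 n j - cha0Row1 n j * chz0Row2 n i} :=
  stmt11_general n
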